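/- arXiv:2205.15283 — 3 statements merged into one kernel-verified Lean document; each statement's English description precedes it below -/
import Mathlib

section
/- For all integers m and n, 6m² + 5mn + 2n² ≠ 1 and 6m² + 5mn + 2n² ≠ -1. (This is the key Diophantine claim in the proof of Theorem 3 (thm:top / thm:doublecover): the intersection form of the double branched cover X₀ takes the value -2(6m² + 5mn + 2n²) on the class mA₀ + nB₀, and a homeomorphism to X₁ would force this to equal ±2, i.e. would force an integer solution of 6m² + 5mn + 2n² = ±1.) -/
/-! Completing the square, `8 (6m² + 5mn + 2n²) = (5m + 4n)² + 23m²`, so the form is positive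
semidefinite and never takes the value `-1`. If it took the value `1`, then `23m² ≤ 8` forces
`m = 0`, leaving `2n² = 1`, which is impossible by parity. -/

theorem eight_mul_quadForm_eq (m n : ℤ) :
    8 * (6 * m ^ 2 + 5 * m * n + 2 * n ^ 2) = (5 * m + 4 * n) ^ 2 + 23 * m ^ 2 := by
  ring

theorem quadForm_nonneg (m n : ℤ) : 0 ≤ 6 * m ^ 2 + 5 * m * n + 2 * n ^ 2 := by
  nlinarith [eight_mul_quadForm_eq m n, sq_nonneg (5 * m + 4 * n), sq_nonneg m]

theorem quadForm_ne_one (m n : ℤ) : 6 * m ^ 2 + 5 * m * n + 2 * n ^ 2 ≠ 1 := by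
  intro h
  have hm : m = 0 := by
    have hsq : m ^ 2 < 1 := by
      nlinarith [eight_mul_quadForm_eq m n, sq_nonneg (5 * m + 4 * n)]
    exact pow_eq_zero_iff two_ne_zero |>.mp (by nlinarith [sq_nonneg m])
  subst hm
  generalize n ^ 2 = k at h
  omega

/-- The key Diophantine claim in the proof of Theorem 3: for all integers `m` and `n`,
`6*m^2 + 5*m*n + 2*n^2` is neither `1` nor `-1`. -/
theorem stmt_0 (m n : ℤ) :
    6 * m ^ 2 + 5 * m * n + 2 * n ^ 2 ≠ 1 ∧ 6 * m ^ 2 + 5 * m * n + 2 * n ^ 2 ≠ -1 :=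
  ⟨quadForm_ne_one m n, fun h => by linarith [quadForm_nonneg m n]⟩
end

section
/- Let A = [[-12,-5],[-5,-4]] and B = [[-12,1],[1,-2]] be 2×2 symmetric matrices over ℤ. Then A and B are not integrally congruent, and A and -B are not integrally congruent: there is no 2×2 integer matrix U with det U = ±1 such that Uᵀ A U = B or Uᵀ A U = -B. (This is the algebraic core of Theorem 3: the intersection forms of the double branched covers X₀ and X₁ are not isomorphic as unimodular integral lattices, for either choice of orientation, so X₀ and X₁ are not homeomorphic and hence the Seifert surfaces Σ₀ and Σ₁ are not topologically isotopic in B⁴.) -/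
open Matrix

/-- Gram matrix of the intersection form of the double branched cover `X₀`. -/
def A : Matrix (Fin 2) (Fin 2) ℤ := !![-12, -5; -5, -4]

/-- Gram matrix of the intersection form of the double branched cover `X₁`. -/
def B : Matrix (Fin 2) (Fin 2) ℤ := !![-12, 1; 1, -2]

/-! Diagonal entries of `Uᵀ A U` are values of the quadratic form `q` of `A`, and
`-12 q(x, y) = (12x + 5y)² + 23y²`. Hence `q ≤ 0`, which rules out the entry `12` of `-B`, and
`q = -2` would force `(12x + 5y)² + 23y² = 24`, which has no integer solution; this rules out
the entry `-2` of `B`. -/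

theorem Matrix.transpose_mul_mul_apply {n R : Type*} [Fintype n] [NonUnitalSemiring R]
    (U M : Matrix n n R) (i j : n) : (Uᵀ * M * U) i j = Uᵀ i ⬝ᵥ (M *ᵥ Uᵀ j) := by
  rw [Matrix.mul_assoc, mul_apply, dotProduct]
  rfl

theorem dotProduct_A_mulVec (v : Fin 2 → ℤ) :
    -12 * (v ⬝ᵥ (A *ᵥ v)) = (12 * v 0 + 5 * v 1) ^ 2 + 23 * v 1 ^ 2 := by
  simp only [dotProduct, mulVec, A, of_apply, cons_val', cons_val_fin_one, Fin.sum_univ_two,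
    cons_val_zero, cons_val_one]
  ring

theorem dotProduct_A_mulVec_nonpos (v : Fin 2 → ℤ) : v ⬝ᵥ (A *ᵥ v) ≤ 0 := by
  nlinarith [dotProduct_A_mulVec v, sq_nonneg (12 * v 0 + 5 * v 1), sq_nonneg (v 1)]

theorem dotProduct_A_mulVec_ne_neg_two (v : Fin 2 → ℤ) : v ⬝ᵥ (A *ᵥ v) ≠ -2 := by
  intro h
  have hsq := dotProduct_A_mulVec v
  rw [h] at hsq
  obtain ⟨hc₁, hc₂⟩ := abs_lt_of_sq_lt_sq'
    (show (12 * v 0 + 5 * v 1) ^ 2 < 5 ^ 2 by nlinarith [sq_nonneg (v 1)]) (by norm_num)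
  obtain ⟨hb₁, hb₂⟩ := abs_lt_of_sq_lt_sq' (show v 1 ^ 2 < 2 ^ 2 by nlinarith) (by norm_num)
  have ha : v 0 = 0 := by omega
  rw [ha] at hsq
  interval_cases v 1 <;> norm_num at hsq

/-- `A` and `B` are not integrally congruent, and `A` and `-B` are not integrally
congruent: there is no `U ∈ GL₂(ℤ)` (i.e. integer matrix with determinant `±1`)
with `Uᵀ A U = B` or `Uᵀ A U = -B`. -/
theorem stmt_3 :
    ¬ ∃ U : Matrix (Fin 2) (Fin 2) ℤ,
      (U.det = 1 ∨ U.det = -1) ∧ (Uᵀ * A * U = B ∨ Uᵀ * A * U = -B) := by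
  rintro ⟨U, -, h | h⟩
  · have h11 : Uᵀ 1 ⬝ᵥ (A *ᵥ Uᵀ 1) = -2 := by rw [← transpose_mul_mul_apply, h]; rfl
    exact dotProduct_A_mulVec_ne_neg_two _ h11
  · have h00 : Uᵀ 0 ⬝ᵥ (A *ᵥ Uᵀ 0) = 12 := by rw [← transpose_mul_mul_apply, h]; rfl
    linarith [dotProduct_A_mulVec_nonpos (Uᵀ 0)]
end

section
/- Let A' = [[-12,-5],[-5,-3]] and B' = [[-12,1],[1,-1]] be 2×2 symmetric matrices over ℤ. Then there is no 2×2 integer matrix U with det U = ±1 such that Uᵀ A' U = B' or Uᵀ A' U = -B'. (This is the algebraic core of the non-orientable counterexample: the intersection forms of the double covers of B⁴ branched along the non-orientable surfaces Σ₀' and Σ₁' are not isomorphic as unimodular integral lattices — B' represents -1, via the vector (0,1), while A' never takes the values ±1 — hence Σ₀' and Σ₁' are not topologically isotopic in B⁴.) -/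
open Matrix

/-- Gram matrix of the intersection form of the double cover of `B⁴` branched along the
non-orientable surface `Σ₀'`. -/
def A' : Matrix (Fin 2) (Fin 2) ℤ := !![-12, -5; -5, -3]

/-- Gram matrix of the intersection form of the double cover of `B⁴` branched along the
non-orientable surface `Σ₁'`. -/
def B' : Matrix (Fin 2) (Fin 2) ℤ := !![-12, 1; 1, -1]

/-!
The diagonal entries of `Uᵀ A' U` are values of the quadratic form of `A'`, and `∓B'` has the
unit `∓1` on its diagonal. But `-A'` is positive definite with minimum `3`, since
`3 (12 x² + 10 x y + 3 y²) = (5 x + 3 y)² + 11 x²`; so `A'` represents no unit.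
-/

lemma not_isUnit_twelve_mul_sq_add_ten_mul_add_three_mul_sq (x y : ℤ) :
    ¬ IsUnit (12 * x ^ 2 + 10 * x * y + 3 * y ^ 2) := by
  have h_sum_sq : 3 * (12 * x ^ 2 + 10 * x * y + 3 * y ^ 2) = (5 * x + 3 * y) ^ 2 + 11 * x ^ 2 := by
    ring
  rw [Int.isUnit_iff]
  rintro (h | h) <;> rw [h] at h_sum_sq
  · have hx : x = 0 := by nlinarith [sq_nonneg (5 * x + 3 * y)]
    subst hx
    omega
  · nlinarith [sq_nonneg (5 * x + 3 * y), sq_nonneg x]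

lemma not_isUnit_dotProduct_A'_mulVec (v : Fin 2 → ℤ) : ¬ IsUnit (v ⬝ᵥ A' *ᵥ v) := by
  have h_form : v ⬝ᵥ A' *ᵥ v = -(12 * v 0 ^ 2 + 10 * v 0 * v 1 + 3 * v 1 ^ 2) := by
    simp only [A', dotProduct, mulVec, Fin.sum_univ_two, cons_val', cons_val_zero, cons_val_one,
      empty_val', cons_val_fin_one, of_apply]
    ring
  rw [h_form, IsUnit.neg_iff]
  exact not_isUnit_twelve_mul_sq_add_ten_mul_add_three_mul_sq _ _

/-- There is no `U ∈ GL₂(ℤ)` (integer matrix with determinant `±1`) such that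
`Uᵀ A' U = B'` or `Uᵀ A' U = -B'`. -/
theorem stmt_6 :
    ¬ ∃ U : Matrix (Fin 2) (Fin 2) ℤ,
      (U.det = 1 ∨ U.det = -1) ∧ (Uᵀ * A' * U = B' ∨ Uᵀ * A' * U = -B') := by
  rintro ⟨U, -, h⟩
  apply not_isUnit_dotProduct_A'_mulVec (Uᵀ 1)
  rw [← mul_mul_apply]
  rcases h with h | h <;> simp [h, B']
end
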